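/- Let M be a topological space and f a continuous selection of continuous functions f₁,…,f_m : M → ℝ. For any J ⊆ {1,…,m} with M_J = {x | I_f(x) = J}, the topological frontier (closure minus the set itself) of M_J is contained in the union ⋃_{J ⊊ I} M_I of all strata with strictly larger active index set. -/
import Mathlib

theorem stmt_5 {M : Type*} [TopologicalSpace M] {m : ℕ}
    (f : M → ℝ) (F : Fin m → M → ℝ)
    (hf : Continuous f) (hF : ∀ i, Continuous (F i))
    (hsel : ∀ x, ∃ i, f x = F i x) (J : Set (Fin m)) :
    closure {x : M | {j : Fin m | f x = F j x} = J} \ {x : M | {j : Fin m | f x = F j x} = J}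
      ⊆ ⋃ I ∈ {I : Set (Fin m) | J ⊂ I}, {x : M | {j : Fin m | f x = F j x} = I} := by
  rintro x ⟨hx, hxn⟩
  have hJ : J ⊆ {j : Fin m | f x = F j x} := by
    intro j hj
    have hclosed : IsClosed {y : M | f y = F j y} := isClosed_eq hf (hF j)
    have hsub : {y : M | {k : Fin m | f y = F k y} = J} ⊆ {y : M | f y = F j y} := by
      intro y hy
      have : j ∈ {k : Fin m | f y = F k y} := hy ▸ hj
      exact this
    exact closure_minimal hsub hclosed hx
  have hss : J ⊂ {j : Fin m | f x = F j x} :=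
    hJ.ssubset_of_ne (fun h => hxn h.symm)
  exact Set.mem_biUnion hss rfl
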